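/- arXiv:2009.03570 — 3 statements merged into one kernel-verified Lean document; each statement's English description precedes it below -/
import Mathlib

section
/- Fix an integer d ≥ 1, a complex Hilbert space H, a Clifford system (c_1, …, c_d, γ) on H, and unitaries U_1, …, U_d on H, each commuting with every c_j and with γ. Let δ ≥ 0 satisfy ‖U_j U_l − U_l U_j‖ ≤ δ for all j, l. Then for all real numbers κ, m with 0 < m ≤ κ, the operator inequality D(κ, m)² ≥ (m² − 4 d² κ² δ)·1 holds. -/
noncomputable section

/-- A Clifford system `(c_1, …, c_d, γ)` on a complex Hilbert space `H`:
`c_j* = -c_j`, `c_j c_l + c_l c_j = -2 δ_{jl} 1`, `γ* = γ`, `γ² = 1`, `γ c_j = -c_j γ`. -/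
structure CliffordSystem (H : Type*) [NormedAddCommGroup H] [InnerProductSpace ℂ H]
    [CompleteSpace H] (d : ℕ) where
  c : Fin d → H →L[ℂ] H
  γ : H →L[ℂ] H
  c_skew : ∀ j, star (c j) = -c j
  c_rel : ∀ j l, c j * c l + c l * c j =
    if j = l then (-2 : ℂ) • (1 : H →L[ℂ] H) else 0
  γ_sa : star γ = γ
  γ_sq : γ * γ = 1
  γ_anticomm : ∀ j, γ * c j = -(c j * γ)

variable {H : Type*} [NormedAddCommGroup H] [InnerProductSpace ℂ H] [CompleteSpace H]

/-- `x = (U - U*)/(2i)`, the "imaginary part" of a unitary `U`. -/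
def xPart (U : H →L[ℂ] H) : H →L[ℂ] H := ((2 * Complex.I)⁻¹ : ℂ) • (U - star U)

/-- `y = (U + U*)/2`, the "real part" of a unitary `U`. -/
def yPart (U : H →L[ℂ] H) : H →L[ℂ] H := ((2 : ℂ)⁻¹ : ℂ) • (U + star U)

/-- The massive hermitian Wilson--Dirac operator
`D(κ, m) = κ·Σ_j i x_j c_j + γ·(κ·Σ_j (y_j − 1) + m)`. -/
def wilsonDirac {d : ℕ} (cs : CliffordSystem H d) (U : Fin d → H →L[ℂ] H)
    (κ m : ℝ) : H →L[ℂ] H :=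
  (κ : ℂ) • (∑ j, Complex.I • (xPart (U j) * cs.c j)) +
    cs.γ * ((κ : ℂ) • (∑ j, (yPart (U j) - 1)) + (m : ℂ) • (1 : H →L[ℂ] H))

/-- `f_m(k)² = Σ_j sin²(2π k_j) + (Σ_j (cos(2π k_j) − 1) + m)²`. -/
def fmSq (d : ℕ) (m : ℝ) (k : Fin d → ℝ) : ℝ :=
  ∑ j, Real.sin (2 * Real.pi * k j) ^ 2 +
    (∑ j, (Real.cos (2 * Real.pi * k j) - 1) + m) ^ 2

/-- `E_{>0}(A)`: the sum of the eigenspaces of `A` with positive (real) eigenvalue. -/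
def posSpace (A : H →L[ℂ] H) : Submodule ℂ H :=
  ⨆ (μ : ℝ) (_ : 0 < μ), Module.End.eigenspace (A.toLinearMap) (μ : ℂ)

/-- `E_{<0}(A)`: the sum of the eigenspaces of `A` with negative (real) eigenvalue. -/
def negSpace (A : H →L[ℂ] H) : Submodule ℂ H :=
  ⨆ (μ : ℝ) (_ : μ < 0), Module.End.eigenspace (A.toLinearMap) (μ : ℂ)

/-- `𝐈(A) = (dim E_{>0}(A) − dim E_{<0}(A))/2`, a priori a half-integer. -/
def Ind (A : H →L[ℂ] H) : ℚ :=
  ((Module.finrank ℂ (posSpace A) : ℚ) - (Module.finrank ℂ (negSpace A) : ℚ)) / 2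

end

/-!
Write `D = κ N + γ S` with `N = Σ_j i x_j c_j`, `S = m - κ T` and `T = Σ_j t_j`, `t_j = 1 - y_j`.
The Clifford relations give `N² = Σ_j x_j² - ½ Σ_{j,l} [x_j, x_l] c_j c_l` and
`N γS + γS N = Σ_j i γ [S, x_j] c_j`, while `(γS)² = S²`. Since `x_j² = 2 t_j - t_j²`, this yields
`D² = m² + 2κ(κ - m) T + κ² Σ_{j ≠ l} t_j t_l` up to commutator terms. As `t_j = ½ |1 - U_j|²`,
each product `t_j t_l` is `¼ |(1 - U_j)(1 - U_l)|² ≥ 0` up to commutators of the unitaries.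
All commutator terms together form a self-adjoint operator of norm at most `(7/2) d² κ² δ`,
hence are bounded below by `-4 d² κ² δ`, and the remaining terms are positive because `κ ≥ m`.
-/

open Finset

attribute [local instance] LieRing.ofAssociativeRing

lemma star_mul_self_mul_star_mul_self {R : Type*} [Ring R] [StarRing R] (a b : R) :
    star a * a * (star b * b) =
      star (a * b) * (a * b) + (⁅star a, star b⁆ * a * b + star a * ⁅a, star b⁆ * b) := by
  rw [star_mul, Ring.lie_def, Ring.lie_def]
  noncomm_ring

lemma sum_mul_sum_eq_sum_mul_self_add_sum_erase {ι R : Type*} [DecidableEq ι]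
    [NonUnitalNonAssocSemiring R] (s : Finset ι) (f : ι → R) :
    (∑ i ∈ s, f i) * ∑ i ∈ s, f i =
      ∑ i ∈ s, f i * f i + ∑ i ∈ s, ∑ j ∈ s.erase i, f i * f j := by
  rw [sum_mul_sum, ← sum_add_distrib]
  exact sum_congr rfl fun i hi => (add_sum_erase s _ hi).symm

lemma norm_sum_le_card_mul {ι E : Type*} [SeminormedAddCommGroup E] (s : Finset ι) (f : ι → E)
    {B : ℝ} (h : ∀ i ∈ s, ‖f i‖ ≤ B) : ‖∑ i ∈ s, f i‖ ≤ #s * B := by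
  simpa using (norm_sum_le s f).trans (sum_le_card_nsmul s _ B h)

section Commutator

lemma norm_lie_comm {A : Type*} [SeminormedRing A] (u v : A) :
    ‖⁅u, v⁆‖ = ‖⁅v, u⁆‖ := by
  rw [← lie_skew, norm_neg]

variable {A : Type*} [NormedRing A] [StarRing A] [CStarRing A]

lemma norm_lie_star_right {u v : A} (hv : v ∈ unitary A) : ‖⁅u, star v⁆‖ = ‖⁅u, v⁆‖ := by
  have h : ⁅u, star v⁆ = star v * ⁅v, u⁆ * star v := by
    simp only [Ring.lie_def, mul_sub, sub_mul, ← mul_assoc, Unitary.star_mul_self_of_mem hv]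
    simp only [mul_assoc, Unitary.mul_star_self_of_mem hv, one_mul, mul_one]
  rw [h, CStarRing.norm_mul_mem_unitary _ (Unitary.star_mem hv),
    CStarRing.norm_mem_unitary_mul _ (Unitary.star_mem hv), norm_lie_comm]

lemma norm_lie_star_star (u v : A) : ‖⁅star u, star v⁆‖ = ‖⁅u, v⁆‖ := by
  rw [norm_lie_comm, ← norm_star ⁅u, v⁆, Ring.lie_def, Ring.lie_def, star_sub, star_mul, star_mul]

variable [NormedAlgebra ℂ A]

lemma norm_lie_smul_add_smul_star_le {u v : A} (hu : u ∈ unitary A) (hv : v ∈ unitary A)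
    {δ : ℝ} (h : ‖⁅u, v⁆‖ ≤ δ) (a b a' b' : ℂ) :
    ‖⁅a • u + b • star u, a' • v + b' • star v⁆‖ ≤ (‖a‖ + ‖b‖) * (‖a'‖ + ‖b'‖) * δ := by
  have h₁ : ‖⁅u, star v⁆‖ ≤ δ := by rwa [norm_lie_star_right hv]
  have h₂ : ‖⁅star u, v⁆‖ ≤ δ := by rwa [norm_lie_comm, norm_lie_star_right hu, norm_lie_comm]
  have h₃ : ‖⁅star u, star v⁆‖ ≤ δ := by rwa [norm_lie_star_star]
  have hexp : ⁅a • u + b • star u, a' • v + b' • star v⁆ = (a * a') • ⁅u, v⁆ +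
      (a * b') • ⁅u, star v⁆ + (b * a') • ⁅star u, v⁆ + (b * b') • ⁅star u, star v⁆ := by
    simp only [add_lie, lie_add, smul_lie, lie_smul]
    module
  rw [hexp]
  refine (norm_add₄_le (E := A)).trans ?_
  simp only [norm_smul, norm_mul]
  have := norm_nonneg a; have := norm_nonneg b; have := norm_nonneg a'; have := norm_nonneg b'
  calc _ ≤ ‖a‖ * ‖a'‖ * δ + ‖a‖ * ‖b'‖ * δ + ‖b‖ * ‖a'‖ * δ + ‖b‖ * ‖b'‖ * δ := by
        gcongr
    _ = _ := by ring

end Commutator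

lemma IsSelfAdjoint.sub_smul_one_le_of_norm_sub_le {A : Type*} [CStarAlgebra A] [PartialOrder A]
    [StarOrderedRing A] {a b : A} (hab : IsSelfAdjoint (a - b)) {r : ℝ} (h : ‖a - b‖ ≤ r) :
    b - r • 1 ≤ a := by
  have h₁ := hab.neg_algebraMap_norm_le_self
  rw [Algebra.algebraMap_eq_smul_one, neg_le_sub_iff_le_add] at h₁
  calc b - r • 1 ≤ b - ‖a - b‖ • 1 := sub_le_sub_left (smul_le_smul_of_nonneg_right h zero_le_one) b
    _ ≤ a := sub_le_iff_le_add.mpr h₁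

section Parts

variable {H : Type*} [NormedAddCommGroup H] [InnerProductSpace ℂ H] [CompleteSpace H]

lemma xPart_eq_smul_add_smul_star (u : H →L[ℂ] H) :
    xPart u = (2 * Complex.I)⁻¹ • u + (-(2 * Complex.I)⁻¹) • star u := by
  rw [xPart, smul_sub, neg_smul, sub_eq_add_neg]

lemma yPart_eq_smul_add_smul_star (u : H →L[ℂ] H) : yPart u = (2 : ℂ)⁻¹ • u + (2 : ℂ)⁻¹ • star u :=
  smul_add _ _ _

lemma norm_lie_xPart_xPart_le {u v : H →L[ℂ] H} (hu : u ∈ unitary (H →L[ℂ] H))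
    (hv : v ∈ unitary (H →L[ℂ] H)) {δ : ℝ} (h : ‖⁅u, v⁆‖ ≤ δ) : ‖⁅xPart u, xPart v⁆‖ ≤ δ := by
  rw [xPart_eq_smul_add_smul_star, xPart_eq_smul_add_smul_star]
  refine (norm_lie_smul_add_smul_star_le hu hv h _ _ _ _).trans_eq ?_
  rw [norm_neg, show ‖(2 * Complex.I)⁻¹‖ = 2⁻¹ by simp]
  ring

lemma norm_lie_yPart_xPart_le {u v : H →L[ℂ] H} (hu : u ∈ unitary (H →L[ℂ] H))
    (hv : v ∈ unitary (H →L[ℂ] H)) {δ : ℝ} (h : ‖⁅u, v⁆‖ ≤ δ) : ‖⁅yPart u, xPart v⁆‖ ≤ δ := by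
  rw [yPart_eq_smul_add_smul_star, xPart_eq_smul_add_smul_star]
  refine (norm_lie_smul_add_smul_star_le hu hv h _ _ _ _).trans_eq ?_
  rw [norm_neg, show ‖(2 * Complex.I)⁻¹‖ = 2⁻¹ by simp]
  norm_num

lemma isSelfAdjoint_xPart (u : H →L[ℂ] H) : IsSelfAdjoint (xPart u) := by
  rw [isSelfAdjoint_iff, xPart_eq_smul_add_smul_star, star_add, star_smul, star_smul, star_star]
  simp [add_comm]

lemma isSelfAdjoint_yPart (u : H →L[ℂ] H) : IsSelfAdjoint (yPart u) := by
  rw [isSelfAdjoint_iff, yPart_eq_smul_add_smul_star, star_add, star_smul, star_smul, star_star]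
  simp [add_comm]

lemma xPart_mul_self_add_yPart_mul_self {u : H →L[ℂ] H} (hu : u ∈ unitary (H →L[ℂ] H)) :
    xPart u * xPart u + yPart u * yPart u = 1 := by
  have hI : (2 * Complex.I)⁻¹ * (2 * Complex.I)⁻¹ = -(2 : ℂ)⁻¹ * (2 : ℂ)⁻¹ := by
    rw [← mul_inv, mul_mul_mul_comm, Complex.I_mul_I]
    norm_num
  simp only [xPart, yPart, smul_mul_smul_comm, hI, sub_mul, mul_sub, add_mul, mul_add,
    Unitary.star_mul_self_of_mem hu, Unitary.mul_star_self_of_mem hu]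
  module

lemma one_sub_yPart_eq_smul_star_mul_self {u : H →L[ℂ] H} (hu : u ∈ unitary (H →L[ℂ] H)) :
    1 - yPart u = (2 : ℂ)⁻¹ • (star (1 - u) * (1 - u)) := by
  simp only [star_sub, star_one, yPart_eq_smul_add_smul_star, sub_mul, mul_sub, one_mul, mul_one,
    Unitary.star_mul_self_of_mem hu]
  module

lemma norm_one_sub_le_two {u : H →L[ℂ] H} (hu : u ∈ unitary (H →L[ℂ] H)) : ‖1 - u‖ ≤ 2 := by
  have h₁ : ‖(1 : H →L[ℂ] H)‖ ≤ 1 := ContinuousLinearMap.norm_id_le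
  have hu₁ : ‖u‖ ≤ 1 := by rwa [← mul_one u, CStarRing.norm_mem_unitary_mul _ hu]
  linarith [norm_sub_le (1 : H →L[ℂ] H) u]

lemma norm_one_sub_yPart_mul_one_sub_yPart_sub_le {u v : H →L[ℂ] H}
    (hu : u ∈ unitary (H →L[ℂ] H)) (hv : v ∈ unitary (H →L[ℂ] H)) {δ : ℝ} (h : ‖⁅u, v⁆‖ ≤ δ) :
    ‖(1 - yPart u) * (1 - yPart v) -
      (4 : ℂ)⁻¹ • (star ((1 - u) * (1 - v)) * ((1 - u) * (1 - v)))‖ ≤ 2 * δ := by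
  have hlie : ∀ a b : H →L[ℂ] H, ⁅1 - a, 1 - b⁆ = ⁅a, b⁆ := fun a b => by
    simp only [Ring.lie_def]; noncomm_ring
  have h₁ : ‖⁅star (1 - u), star (1 - v)⁆‖ ≤ δ := by
    rwa [star_sub, star_sub, star_one, hlie, norm_lie_star_star]
  have h₂ : ‖⁅1 - u, star (1 - v)⁆‖ ≤ δ := by
    rwa [star_sub, star_one, hlie, norm_lie_star_right hv]
  have hZu := norm_one_sub_le_two hu
  have hZv := norm_one_sub_le_two hv
  have hδ : 0 ≤ δ := (norm_nonneg _).trans h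
  rw [one_sub_yPart_eq_smul_star_mul_self hu, one_sub_yPart_eq_smul_star_mul_self hv,
    smul_mul_smul_comm, star_mul_self_mul_star_mul_self, smul_add,
    show (2 : ℂ)⁻¹ * 2⁻¹ = 4⁻¹ by norm_num, add_sub_cancel_left, norm_smul, show ‖(4 : ℂ)⁻¹‖ = 4⁻¹ by norm_num]
  calc 4⁻¹ * ‖_ + _‖ ≤ 4⁻¹ * (δ * 2 * 2 + 2 * δ * 2) := by
        gcongr
        refine (norm_add_le _ _).trans (add_le_add ?_ ?_) <;> refine norm_mul₃_le.trans ?_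
        · gcongr
        · rw [norm_star]; gcongr
    _ = 2 * δ := by ring

lemma Commute.xPart_left {u a : H →L[ℂ] H} (h : Commute u a) (h' : Commute (star u) a) :
    Commute (xPart u) a :=
  (h.sub_left h').smul_left _

lemma Commute.yPart_left {u a : H →L[ℂ] H} (h : Commute u a) (h' : Commute (star u) a) :
    Commute (yPart u) a :=
  (h.add_left h').smul_left _

end Parts

namespace CliffordSystem

variable {H : Type*} [NormedAddCommGroup H] [InnerProductSpace ℂ H] [CompleteSpace H] {d : ℕ}
  (cs : CliffordSystem H d)

lemma c_mul_self (j : Fin d) : cs.c j * cs.c j = -1 := by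
  have h := cs.c_rel j j
  rw [if_pos rfl, ← two_smul ℂ] at h
  exact smul_right_injective _ two_ne_zero (h.trans (by module))

lemma c_mem_unitary (j : Fin d) : cs.c j ∈ unitary (H →L[ℂ] H) := by
  rw [Unitary.mem_iff, cs.c_skew, neg_mul, mul_neg, cs.c_mul_self, neg_neg, and_self]

lemma γ_mem_unitary : cs.γ ∈ unitary (H →L[ℂ] H) := by
  rw [Unitary.mem_iff, cs.γ_sa, cs.γ_sq, and_self]

lemma commute_star_c {u : H →L[ℂ] H} {l : Fin d} (h : Commute u (cs.c l)) :
    Commute (star u) (cs.c l) := by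
  simpa [cs.c_skew] using h.star_star

lemma commute_star_γ {u : H →L[ℂ] H} (h : Commute u cs.γ) : Commute (star u) cs.γ := by
  simpa [cs.γ_sa] using h.star_star

lemma commute_xPart_c {u : H →L[ℂ] H} {l : Fin d} (h : Commute u (cs.c l)) :
    Commute (xPart u) (cs.c l) :=
  h.xPart_left (cs.commute_star_c h)

lemma commute_yPart_c {u : H →L[ℂ] H} {l : Fin d} (h : Commute u (cs.c l)) :
    Commute (yPart u) (cs.c l) :=
  h.yPart_left (cs.commute_star_c h)

lemma commute_xPart_γ {u : H →L[ℂ] H} (h : Commute u cs.γ) : Commute (xPart u) cs.γ :=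
  h.xPart_left (cs.commute_star_γ h)

lemma commute_yPart_γ {u : H →L[ℂ] H} (h : Commute u cs.γ) : Commute (yPart u) cs.γ :=
  h.yPart_left (cs.commute_star_γ h)

lemma isSelfAdjoint_sum_I_smul_mul_c {x : Fin d → H →L[ℂ] H} (hx : ∀ j, IsSelfAdjoint (x j))
    (hxc : ∀ j, Commute (x j) (cs.c j)) : IsSelfAdjoint (∑ j, Complex.I • (x j * cs.c j)) := by
  refine isSelfAdjoint_iff.mpr ?_
  rw [star_sum]
  refine sum_congr rfl fun j _ => ?_
  rw [star_smul, star_mul, cs.c_skew, (hx j).star_eq, neg_mul, ← (hxc j).eq]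
  simp

lemma sum_I_smul_mul_c_sq {x : Fin d → H →L[ℂ] H} (hx : ∀ j l, Commute (x j) (cs.c l)) :
    (∑ j, Complex.I • (x j * cs.c j)) ^ 2 =
      ∑ j, x j * x j - (2 : ℂ)⁻¹ • ∑ j, ∑ l, ⁅x j, x l⁆ * (cs.c j * cs.c l) := by
  have hterm : ∀ j l, Complex.I • (x j * cs.c j) * Complex.I • (x l * cs.c l) =
      -(x j * x l * (cs.c j * cs.c l)) := fun j l => by
    rw [smul_mul_smul_comm, Complex.I_mul_I, neg_one_smul, mul_assoc, ← mul_assoc (cs.c j),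
      ← (hx l j).eq]
    noncomm_ring
  have hpair : ∀ j l, x j * x l * (cs.c j * cs.c l) + x l * x j * (cs.c l * cs.c j) =
      ⁅x j, x l⁆ * (cs.c j * cs.c l) + x l * x j * (cs.c j * cs.c l + cs.c l * cs.c j) :=
    fun j l => by rw [Ring.lie_def]; noncomm_ring
  have hdiag : ∀ j, ∑ l, x l * x j * (cs.c j * cs.c l + cs.c l * cs.c j) =
      (-2 : ℂ) • (x j * x j) := fun j => by
    simp [cs.c_rel, mul_ite]
  have hsym : (2 : ℂ) • ∑ j, ∑ l, x j * x l * (cs.c j * cs.c l) =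
      ∑ j, ∑ l, ⁅x j, x l⁆ * (cs.c j * cs.c l) + (-2 : ℂ) • ∑ j, x j * x j := by
    rw [two_smul]
    nth_rewrite 2 [sum_comm]
    simp only [← sum_add_distrib, hpair, smul_sum]
    simp only [sum_add_distrib, hdiag]
  rw [sq, sum_mul_sum]
  simp only [hterm, sum_neg_distrib]
  rw [← smul_right_injective _ (two_ne_zero' ℂ) |>.eq_iff, smul_neg, hsym]
  module

lemma sum_I_smul_mul_c_anticomm {x : Fin d → H →L[ℂ] H} (hxγ : ∀ j, Commute (x j) cs.γ)
    {S : H →L[ℂ] H} (hSc : ∀ j, Commute S (cs.c j)) :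
    (∑ j, Complex.I • (x j * cs.c j)) * (cs.γ * S) + cs.γ * S * ∑ j, Complex.I • (x j * cs.c j) =
      ∑ j, Complex.I • (cs.γ * ⁅S, x j⁆ * cs.c j) := by
  rw [sum_mul, mul_sum, ← sum_add_distrib]
  refine sum_congr rfl fun j _ => ?_
  rw [smul_mul_assoc, mul_smul_comm, ← smul_add]
  have hleft : x j * cs.c j * (cs.γ * S) = -(cs.γ * x j * (S * cs.c j)) :=
    calc x j * cs.c j * (cs.γ * S) = x j * (cs.c j * cs.γ) * S := by noncomm_ring
      _ = -(x j * cs.γ * (cs.c j * S)) := by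
        rw [← neg_eq_iff_eq_neg.mpr (cs.γ_anticomm j)]; noncomm_ring
      _ = -(cs.γ * x j * (S * cs.c j)) := by rw [(hxγ j).eq, (hSc j).eq]
  rw [hleft, Ring.lie_def]
  noncomm_ring

end CliffordSystem

section WilsonDirac

variable {H : Type*} [NormedAddCommGroup H] [InnerProductSpace ℂ H] [CompleteSpace H] {d : ℕ}

noncomputable def wilsonMass (U : Fin d → H →L[ℂ] H) (κ m : ℝ) : H →L[ℂ] H :=
  (κ : ℂ) • ∑ j, (yPart (U j) - 1) + (m : ℂ) • 1

noncomputable def wilsonTerm (U : Fin d → H →L[ℂ] H) : H →L[ℂ] H :=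
  ∑ j, (1 - yPart (U j))

lemma wilsonMass_eq (U : Fin d → H →L[ℂ] H) (κ m : ℝ) :
    wilsonMass U κ m = (m : ℂ) • 1 - (κ : ℂ) • wilsonTerm U := by
  rw [wilsonMass, wilsonTerm, sum_sub_distrib, sum_sub_distrib]
  module

lemma Commute.wilsonMass_left {U : Fin d → H →L[ℂ] H} {a : H →L[ℂ] H}
    (h : ∀ j, Commute (yPart (U j)) a) (κ m : ℝ) : Commute (wilsonMass U κ m) a :=
  ((Commute.sum_left _ _ _ fun j _ => (h j).sub_left (Commute.one_left a)).smul_left _).add_left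
    ((Commute.one_left a).smul_left _)

lemma isSelfAdjoint_wilsonMass (U : Fin d → H →L[ℂ] H) (κ m : ℝ) :
    IsSelfAdjoint (wilsonMass U κ m) := by
  simp [isSelfAdjoint_iff, wilsonMass, star_sum, (isSelfAdjoint_yPart _).star_eq]

lemma wilsonTerm_nonneg {U : Fin d → H →L[ℂ] H} (hU : ∀ j, U j ∈ unitary (H →L[ℂ] H)) :
    0 ≤ wilsonTerm U := by
  refine sum_nonneg fun j _ => ?_
  rw [one_sub_yPart_eq_smul_star_mul_self (hU j),
    show (2 : ℂ)⁻¹ = ((2⁻¹ : ℝ) : ℂ) by push_cast; rfl, Complex.coe_smul]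
  exact smul_nonneg (by norm_num) (star_mul_self_nonneg _)

lemma lie_wilsonMass (U : Fin d → H →L[ℂ] H) (κ m : ℝ) (a : H →L[ℂ] H) :
    ⁅wilsonMass U κ m, a⁆ = (κ : ℂ) • ∑ j, ⁅yPart (U j), a⁆ := by
  simp only [wilsonMass, add_lie, smul_lie, sum_lie, sub_lie, (Commute.one_left a).lie_eq,
    sub_zero, smul_zero, add_zero]

lemma sum_xPart_mul_self {U : Fin d → H →L[ℂ] H} (hU : ∀ j, U j ∈ unitary (H →L[ℂ] H)) :
    ∑ j, xPart (U j) * xPart (U j) =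
      (2 : ℂ) • wilsonTerm U - ∑ j, (1 - yPart (U j)) * (1 - yPart (U j)) := by
  rw [wilsonTerm, smul_sum, ← sum_sub_distrib]
  refine sum_congr rfl fun j _ => ?_
  rw [eq_sub_of_add_eq (xPart_mul_self_add_yPart_mul_self (hU j))]
  simp only [sub_mul, mul_sub, one_mul, mul_one]
  module

variable (cs : CliffordSystem H d) {U : Fin d → H →L[ℂ] H}

lemma isSelfAdjoint_wilsonDirac (hUc : ∀ j l, Commute (U j) (cs.c l))
    (hUγ : ∀ j, Commute (U j) cs.γ) (κ m : ℝ) : IsSelfAdjoint (wilsonDirac cs U κ m) := by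
  have hN := cs.isSelfAdjoint_sum_I_smul_mul_c (fun j => isSelfAdjoint_xPart (U j))
    fun j => cs.commute_xPart_c (hUc j j)
  have hS := isSelfAdjoint_wilsonMass U κ m
  have hSγ : Commute (wilsonMass U κ m) cs.γ :=
    Commute.wilsonMass_left (fun l => cs.commute_yPart_γ (hUγ l)) κ m
  rw [isSelfAdjoint_iff, wilsonDirac, ← wilsonMass, star_add, star_smul, hN.star_eq, star_mul,
    hS.star_eq, cs.γ_sa, hSγ.eq, Complex.star_def, Complex.conj_ofReal]

lemma wilsonDirac_sq (hU : ∀ j, U j ∈ unitary (H →L[ℂ] H))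
    (hUc : ∀ j l, Commute (U j) (cs.c l)) (hUγ : ∀ j, Commute (U j) cs.γ) (κ m : ℝ) :
    wilsonDirac cs U κ m ^ 2 =
      (m : ℂ) ^ 2 • (1 : H →L[ℂ] H) + (2 * κ * (κ - m) : ℂ) • wilsonTerm U +
        (κ : ℂ) ^ 2 • ∑ j, ∑ l ∈ univ.erase j, (1 - yPart (U j)) * (1 - yPart (U l)) -
        ((κ : ℂ) ^ 2 / 2) • ∑ j, ∑ l, ⁅xPart (U j), xPart (U l)⁆ * (cs.c j * cs.c l) +
        (κ : ℂ) • ∑ j, Complex.I • (cs.γ * ⁅wilsonMass U κ m, xPart (U j)⁆ * cs.c j) := by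
  set S := wilsonMass U κ m
  set N := ∑ j, Complex.I • (xPart (U j) * cs.c j)
  have hSc : ∀ j, Commute S (cs.c j) := fun j =>
    Commute.wilsonMass_left (fun l => cs.commute_yPart_c (hUc l j)) κ m
  have hSγ : Commute S cs.γ := Commute.wilsonMass_left (fun l => cs.commute_yPart_γ (hUγ l)) κ m
  have hB : cs.γ * S * (cs.γ * S) = S * S := by
    rw [mul_assoc, ← mul_assoc S, hSγ.eq, ← mul_assoc, ← mul_assoc, cs.γ_sq, one_mul]
  have hexp : wilsonDirac cs U κ m ^ 2 =
      (κ : ℂ) ^ 2 • N ^ 2 + (κ : ℂ) • (N * (cs.γ * S) + cs.γ * S * N) + cs.γ * S * (cs.γ * S) := by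
    rw [show wilsonDirac cs U κ m = (κ : ℂ) • N + cs.γ * S from rfl]
    simp only [sq, add_mul, mul_add, smul_mul_assoc, mul_smul_comm]
    module
  rw [hexp, cs.sum_I_smul_mul_c_sq fun j l => cs.commute_xPart_c (hUc j l),
    cs.sum_I_smul_mul_c_anticomm (fun j => cs.commute_xPart_γ (hUγ j)) hSc, hB,
    sum_xPart_mul_self hU]
  have hTT := sum_mul_sum_eq_sum_mul_self_add_sum_erase univ fun j => 1 - yPart (U j)
  have hSS : S * S = (m : ℂ) ^ 2 • 1 - (2 * κ * m : ℂ) • wilsonTerm U + (κ : ℂ) ^ 2 •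
      (∑ j, (1 - yPart (U j)) * (1 - yPart (U j)) +
        ∑ j, ∑ l ∈ univ.erase j, (1 - yPart (U j)) * (1 - yPart (U l))) := by
    rw [show S = _ from wilsonMass_eq U κ m, ← hTT, ← wilsonTerm]
    simp only [sub_mul, mul_sub, smul_mul_smul_comm, one_mul, mul_one]
    module
  rw [hSS]
  module

variable {δ : ℝ}

lemma norm_sum_lie_xPart_mul_c_le (hU : ∀ j, U j ∈ unitary (H →L[ℂ] H))
    (hcomm : ∀ j l, ‖⁅U j, U l⁆‖ ≤ δ) :
    ‖∑ j, ∑ l, ⁅xPart (U j), xPart (U l)⁆ * (cs.c j * cs.c l)‖ ≤ d * (d * δ) := by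
  have h : ∀ j l, ‖⁅xPart (U j), xPart (U l)⁆ * (cs.c j * cs.c l)‖ ≤ δ := fun j l => by
    rw [CStarRing.norm_mul_mem_unitary _ (mul_mem (cs.c_mem_unitary j) (cs.c_mem_unitary l))]
    exact norm_lie_xPart_xPart_le (hU j) (hU l) (hcomm j l)
  simpa using norm_sum_le_card_mul univ _ fun j _ => norm_sum_le_card_mul univ _ fun l _ => h j l

lemma norm_sum_I_smul_γ_mul_lie_wilsonMass_le (hU : ∀ j, U j ∈ unitary (H →L[ℂ] H))
    (hcomm : ∀ j l, ‖⁅U j, U l⁆‖ ≤ δ) (κ m : ℝ) :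
    ‖∑ j, Complex.I • (cs.γ * ⁅wilsonMass U κ m, xPart (U j)⁆ * cs.c j)‖ ≤ d * (|κ| * (d * δ)) := by
  have h : ∀ j, ‖Complex.I • (cs.γ * ⁅wilsonMass U κ m, xPart (U j)⁆ * cs.c j)‖ ≤ |κ| * (d * δ) :=
    fun j => by
    rw [norm_smul, Complex.norm_I, one_mul, CStarRing.norm_mul_mem_unitary _ (cs.c_mem_unitary j),
      CStarRing.norm_mem_unitary_mul _ cs.γ_mem_unitary, lie_wilsonMass, norm_smul,
      Complex.norm_real, Real.norm_eq_abs]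
    gcongr
    simpa using norm_sum_le_card_mul univ _ fun l _ =>
      norm_lie_yPart_xPart_le (hU l) (hU j) (hcomm l j)
  simpa using norm_sum_le_card_mul univ _ fun j _ => h j

lemma norm_sum_sum_erase_sub_le (hU : ∀ j, U j ∈ unitary (H →L[ℂ] H)) (hδ : 0 ≤ δ)
    (hcomm : ∀ j l, ‖⁅U j, U l⁆‖ ≤ δ) :
    ‖∑ j, ∑ l ∈ univ.erase j, ((1 - yPart (U j)) * (1 - yPart (U l)) -
      (4 : ℂ)⁻¹ • (star ((1 - U j) * (1 - U l)) * ((1 - U j) * (1 - U l))))‖ ≤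
      d * (d * (2 * δ)) := by
  refine (norm_sum_le_card_mul (B := d * (2 * δ)) univ _ fun j _ => ?_).trans (by simp)
  refine (norm_sum_le_card_mul _ _ fun l _ =>
    norm_one_sub_yPart_mul_one_sub_yPart_sub_le (hU j) (hU l) (hcomm j l)).trans ?_
  gcongr
  exact_mod_cast (card_erase_le).trans (by simp)

lemma norm_wilsonDirac_sq_sub_le (hU : ∀ j, U j ∈ unitary (H →L[ℂ] H))
    (hUc : ∀ j l, Commute (U j) (cs.c l)) (hUγ : ∀ j, Commute (U j) cs.γ) (hδ : 0 ≤ δ)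
    (hcomm : ∀ j l, ‖⁅U j, U l⁆‖ ≤ δ) (κ m : ℝ) :
    ‖wilsonDirac cs U κ m ^ 2 - (m ^ 2 • (1 : H →L[ℂ] H) + (2 * κ * (κ - m)) • wilsonTerm U +
      (κ ^ 2 / 4) • ∑ j, ∑ l ∈ univ.erase j,
        star ((1 - U j) * (1 - U l)) * ((1 - U j) * (1 - U l)))‖ ≤ 4 * d ^ 2 * κ ^ 2 * δ := by
  have hE := norm_sum_sum_erase_sub_le hU hδ hcomm
  have hG := norm_sum_lie_xPart_mul_c_le cs hU hcomm
  have hC := norm_sum_I_smul_γ_mul_lie_wilsonMass_le cs hU hcomm κ m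
  rw [wilsonDirac_sq cs hU hUc hUγ]
  set E := ∑ j, ∑ l ∈ univ.erase j, ((1 - yPart (U j)) * (1 - yPart (U l)) -
      (4 : ℂ)⁻¹ • (star ((1 - U j) * (1 - U l)) * ((1 - U j) * (1 - U l))))
  set G := ∑ j, ∑ l, ⁅xPart (U j), xPart (U l)⁆ * (cs.c j * cs.c l)
  set C := ∑ j, Complex.I • (cs.γ * ⁅wilsonMass U κ m, xPart (U j)⁆ * cs.c j)
  have hO : ∑ j, ∑ l ∈ univ.erase j, (1 - yPart (U j)) * (1 - yPart (U l)) =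
      E + (4 : ℂ)⁻¹ • ∑ j, ∑ l ∈ univ.erase j,
        star ((1 - U j) * (1 - U l)) * ((1 - U j) * (1 - U l)) := by
    simp only [E, sum_sub_distrib, smul_sum, sub_add_cancel]
  rw [hO]
  simp only [← Complex.coe_smul]
  push_cast
  calc _ = ‖(κ : ℂ) ^ 2 • E - ((κ : ℂ) ^ 2 / 2) • G + (κ : ℂ) • C‖ := by congr 1; module
    _ ≤ κ ^ 2 * (d * (d * (2 * δ))) + κ ^ 2 / 2 * (d * (d * δ)) + |κ| * (d * (|κ| * (d * δ))) := by
      refine (norm_add_le _ _).trans (add_le_add ((norm_sub_le _ _).trans (add_le_add ?_ ?_)) ?_)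
      all_goals
        simp only [norm_smul, norm_pow, norm_div, Complex.norm_real, Real.norm_eq_abs, sq_abs,
          RCLike.norm_ofNat]
        gcongr
    _ ≤ 4 * d ^ 2 * κ ^ 2 * δ := by
      rw [← sq_abs κ]
      nlinarith [show 0 ≤ (d : ℝ) ^ 2 * |κ| ^ 2 * δ by positivity]

end WilsonDirac

theorem statement1_general (d : ℕ) {H : Type*} [NormedAddCommGroup H]
    [InnerProductSpace ℂ H] [CompleteSpace H] (cs : CliffordSystem H d)
    (U : Fin d → H →L[ℂ] H) (hU : ∀ j, U j ∈ unitary (H →L[ℂ] H))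
    (hUc : ∀ j l, Commute (U j) (cs.c l)) (hUγ : ∀ j, Commute (U j) cs.γ)
    (δ : ℝ) (hδ : 0 ≤ δ) (hcomm : ∀ j l, ‖U j * U l - U l * U j‖ ≤ δ)
    (κ m : ℝ) (hm : 0 < m) (hκ : m ≤ κ) :
    (wilsonDirac cs U κ m ^ 2 -
      ((m ^ 2 - 4 * (d : ℝ) ^ 2 * κ ^ 2 * δ : ℝ) : ℂ) • (1 : H →L[ℂ] H)).IsPositive := by
  set B := m ^ 2 • (1 : H →L[ℂ] H) + (2 * κ * (κ - m)) • wilsonTerm U +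
    (κ ^ 2 / 4) • ∑ j, ∑ l ∈ univ.erase j, star ((1 - U j) * (1 - U l)) * ((1 - U j) * (1 - U l))
  have hB : m ^ 2 • (1 : H →L[ℂ] H) ≤ B := by
    refine le_add_of_le_of_nonneg (le_add_of_nonneg_right ?_) ?_
    · exact smul_nonneg (by nlinarith) (wilsonTerm_nonneg hU)
    · exact smul_nonneg (by positivity) <|
        sum_nonneg fun j _ => sum_nonneg fun l _ => star_mul_self_nonneg _
  have hBsa : IsSelfAdjoint B := .of_nonneg <| (smul_nonneg (sq_nonneg m) zero_le_one).trans hB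
  have hD := ((isSelfAdjoint_wilsonDirac cs hUc hUγ κ m).pow 2).sub hBsa
  have hDB := hD.sub_smul_one_le_of_norm_sub_le <|
    norm_wilsonDirac_sq_sub_le cs hU hUc hUγ hδ hcomm κ m
  rw [← ContinuousLinearMap.nonneg_iff_isPositive, Complex.coe_smul, sub_nonneg, sub_smul]
  exact (sub_le_sub_right hB _).trans hDB

/-- a priori lower bound `D(κ,m)² ≥ (m² − 4d²κ²δ)·1` for `0 < m ≤ κ`. -/
theorem statement1 (d : ℕ) (hd : 1 ≤ d) {H : Type*} [NormedAddCommGroup H]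
    [InnerProductSpace ℂ H] [CompleteSpace H] (cs : CliffordSystem H d)
    (U : Fin d → H →L[ℂ] H) (hU : ∀ j, U j ∈ unitary (H →L[ℂ] H))
    (hUc : ∀ j l, Commute (U j) (cs.c l)) (hUγ : ∀ j, Commute (U j) cs.γ)
    (δ : ℝ) (hδ : 0 ≤ δ) (hcomm : ∀ j l, ‖U j * U l - U l * U j‖ ≤ δ)
    (κ m : ℝ) (hm : 0 < m) (hκ : m ≤ κ) :
    (wilsonDirac cs U κ m ^ 2 -
      ((m ^ 2 - 4 * (d : ℝ) ^ 2 * κ ^ 2 * δ : ℝ) : ℂ) • (1 : H →L[ℂ] H)).IsPositive :=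
  statement1_general d cs U hU hUc hUγ δ hδ hcomm κ m hm hκ
end

section
/- Fix an integer d ≥ 1, a real number m with 0 < m < 2, a complex Hilbert space H, and a Clifford system (c_1, …, c_d, γ) on H. Then for every k = (k_1, …, k_d) ∈ ℝ^d the operator Σ_{j=1}^d i·sin(2π k_j)·c_j + (Σ_{j=1}^d (cos(2π k_j) − 1) + m)·γ is self-adjoint and invertible; indeed its square equals f_m(k)²·1 with f_m(k)² > 0. -/
/- Proof idea: the operator is `∑ₒ aₒ eₒ` for the pairwise anticommuting generators
`e = (γ, c_1, …, c_d)` with real or purely imaginary coefficients, so it is self-adjoint and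
its square is `∑ₒ aₒ² eₒ² = f_m(k)² · 1`. If `f_m(k)` vanished, every `sin(2π k_j)` would be
`0`, so every `cos(2π k_j) - 1` would be `0` or `-2`, and `m ∈ (0, 2)` could not cancel their
sum. -/

theorem sq_sum_smul_of_anticomm {R A ι : Type*} [CommSemiring R] [Semiring A] [Algebra R A]
    (s : Finset ι) (a : ι → R) (e : ι → A)
    (he : ∀ i ∈ s, ∀ j ∈ s, i ≠ j → e i * e j + e j * e i = 0) :
    (∑ i ∈ s, a i • e i) ^ 2 = ∑ i ∈ s, a i ^ 2 • e i ^ 2 := by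
  classical
  induction s using Finset.induction_on with
  | empty => simp
  | insert i s hi ih =>
    have hcross : a i • e i * ∑ j ∈ s, a j • e j + (∑ j ∈ s, a j • e j) * a i • e i = 0 := by
      rw [Finset.mul_sum, Finset.sum_mul, ← Finset.sum_add_distrib]
      refine Finset.sum_eq_zero fun j hj => ?_
      have hij : i ≠ j := fun h => hi (h ▸ hj)
      rw [smul_mul_smul_comm, smul_mul_smul_comm, mul_comm (a j), ← smul_add,
        he i (s.mem_insert_self i) j (s.mem_insert_of_mem hj) hij, smul_zero]
    have hexpand : ∀ x y : A, (x + y) ^ 2 = x ^ 2 + (x * y + y * x) + y ^ 2 := fun x y => by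
      rw [sq, sq, sq, add_mul, mul_add, mul_add]; abel
    rw [Finset.sum_insert hi, Finset.sum_insert hi, hexpand, hcross, add_zero, smul_pow,
      ih fun j hj l hl => he j (s.mem_insert_of_mem hj) l (s.mem_insert_of_mem hl)]

theorem isUnit_of_sq_eq_smul_one {R A : Type*} [Field R] [Ring A] [Algebra R A] {x : A}
    {r : R} (hr : r ≠ 0) (hx : x ^ 2 = r • 1) : IsUnit x := by
  rw [← isUnit_pow_iff two_ne_zero, hx, ← Algebra.algebraMap_eq_smul_one]
  exact (isUnit_iff_ne_zero.mpr hr).map _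

theorem sum_add_ne_zero_of_eq_zero_or_le_neg_two {ι : Type*} (s : Finset ι) (t : ι → ℝ)
    (ht : ∀ j ∈ s, t j = 0 ∨ t j ≤ -2) {m : ℝ} (hm0 : 0 < m) (hm2 : m < 2) :
    ∑ j ∈ s, t j + m ≠ 0 := by
  by_cases hzero : ∀ j ∈ s, t j = 0
  · rw [Finset.sum_eq_zero hzero, zero_add]
    exact hm0.ne'
  · push Not at hzero
    obtain ⟨j₀, hj₀, hne⟩ := hzero
    have hnonpos : ∀ j ∈ s, 0 ≤ -t j := fun j hj => by
      rcases ht j hj with h | h <;> linarith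
    have hle : -t j₀ ≤ ∑ j ∈ s, -t j := Finset.single_le_sum hnonpos hj₀
    rw [Finset.sum_neg_distrib] at hle
    have := (ht j₀ hj₀).resolve_left hne
    linarith

theorem fmSq_pos {d : ℕ} {m : ℝ} (hm0 : 0 < m) (hm2 : m < 2) (k : Fin d → ℝ) :
    0 < fmSq d m k := by
  have hsin : 0 ≤ ∑ j, Real.sin (2 * Real.pi * k j) ^ 2 :=
    Finset.sum_nonneg fun j _ => sq_nonneg _
  rcases hsin.lt_or_eq with hpos | hzero
  · exact add_pos_of_pos_of_nonneg hpos (sq_nonneg _)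
  · have hsin_zero : ∀ j, Real.sin (2 * Real.pi * k j) = 0 := fun j =>
      pow_eq_zero_iff two_ne_zero |>.mp <|
        (Finset.sum_eq_zero_iff_of_nonneg fun j _ => sq_nonneg _).mp hzero.symm j
          (Finset.mem_univ j)
    have hcos : ∀ j ∈ Finset.univ, Real.cos (2 * Real.pi * k j) - 1 = 0 ∨
        Real.cos (2 * Real.pi * k j) - 1 ≤ -2 := fun j _ => by
      rcases Real.sin_eq_zero_iff_cos_eq.mp (hsin_zero j) with h | h <;> rw [h] <;> norm_num
    rw [fmSq, ← hzero, zero_add]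
    exact sq_pos_of_ne_zero (sum_add_ne_zero_of_eq_zero_or_le_neg_two _ _ hcos hm0 hm2)

namespace CliffordSystem

variable {H : Type*} [NormedAddCommGroup H] [InnerProductSpace ℂ H] [CompleteSpace H] {d : ℕ}
  (cs : CliffordSystem H d)

theorem c_sq (j : Fin d) : cs.c j ^ 2 = -1 := by
  have h2 : (2 : ℂ) • cs.c j ^ 2 = (2 : ℂ) • -1 := by
    rw [two_smul, sq, cs.c_rel, if_pos rfl]; module
  exact smul_right_injective _ two_ne_zero h2

def gen : Option (Fin d) → H →L[ℂ] H := fun o => o.elim cs.γ cs.c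

theorem gen_anticomm {o o' : Option (Fin d)} (h : o ≠ o') :
    cs.gen o * cs.gen o' + cs.gen o' * cs.gen o = 0 := by
  rcases o with _ | j <;> rcases o' with _ | l
  · exact absurd rfl h
  · simp [gen, cs.γ_anticomm]
  · simp [gen, cs.γ_anticomm]
  · simpa [gen, Option.some_inj.not.mp h] using cs.c_rel j l

theorem sq_sum_smul_c_add_smul_γ (s : Fin d → ℝ) (M : ℝ) :
    (∑ j, (Complex.I * (s j : ℂ)) • cs.c j + (M : ℂ) • cs.γ) ^ 2 =
      ((∑ j, s j ^ 2 + M ^ 2 : ℝ) : ℂ) • 1 := by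
  have hsum : ∑ j, (Complex.I * (s j : ℂ)) • cs.c j + (M : ℂ) • cs.γ =
      ∑ o, (o.elim (M : ℂ) fun j => Complex.I * s j) • cs.gen o := by
    rw [Fintype.sum_option, add_comm]; rfl
  rw [hsum, sq_sum_smul_of_anticomm _ _ _ fun o _ o' _ h => cs.gen_anticomm h,
    Fintype.sum_option]
  simp only [gen, Option.elim, cs.c_sq, sq cs.γ, cs.γ_sq, mul_pow, Complex.I_sq]
  push_cast
  rw [add_smul, add_comm, Finset.sum_smul]
  simp only [neg_one_mul, neg_smul, smul_neg, neg_neg]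

theorem isSelfAdjoint_sum_smul_c_add_smul_γ (s : Fin d → ℝ) (M : ℝ) :
    IsSelfAdjoint (∑ j, (Complex.I * (s j : ℂ)) • cs.c j + (M : ℂ) • cs.γ) := by
  simp [IsSelfAdjoint, star_sum, star_smul, cs.c_skew, cs.γ_sa]

end CliffordSystem

theorem statement2_general (d : ℕ) (m : ℝ) (hm0 : 0 < m) (hm2 : m < 2)
    {H : Type*} [NormedAddCommGroup H] [InnerProductSpace ℂ H] [CompleteSpace H]
    (cs : CliffordSystem H d) (k : Fin d → ℝ) :
    let h : H →L[ℂ] H :=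
      ∑ j, (Complex.I * (Real.sin (2 * Real.pi * k j) : ℂ)) • cs.c j +
        ((∑ j, (Real.cos (2 * Real.pi * k j) - 1) + m : ℝ) : ℂ) • cs.γ
    IsSelfAdjoint h ∧ IsUnit h ∧
      h ^ 2 = ((fmSq d m k : ℝ) : ℂ) • (1 : H →L[ℂ] H) ∧ 0 < fmSq d m k := by
  intro h
  have hsq : h ^ 2 = ((fmSq d m k : ℝ) : ℂ) • 1 := cs.sq_sum_smul_c_add_smul_γ _ _
  have hpos : 0 < fmSq d m k := fmSq_pos hm0 hm2 k
  exact ⟨cs.isSelfAdjoint_sum_smul_c_add_smul_γ _ _,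
    isUnit_of_sq_eq_smul_one (Complex.ofReal_ne_zero.mpr hpos.ne') hsq, hsq, hpos⟩

/-- pointwise invertibility of the universal massive hermitian
Wilson--Dirac operator, identified with a matrix-valued function on the torus. -/
theorem statement2 (d : ℕ) (hd : 1 ≤ d) (m : ℝ) (hm0 : 0 < m) (hm2 : m < 2)
    {H : Type*} [NormedAddCommGroup H] [InnerProductSpace ℂ H] [CompleteSpace H]
    (cs : CliffordSystem H d) (k : Fin d → ℝ) :
    let h : H →L[ℂ] H :=
      ∑ j, (Complex.I * (Real.sin (2 * Real.pi * k j) : ℂ)) • cs.c j +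
        ((∑ j, (Real.cos (2 * Real.pi * k j) - 1) + m : ℝ) : ℂ) • cs.γ
    IsSelfAdjoint h ∧ IsUnit h ∧
      h ^ 2 = ((fmSq d m k : ℝ) : ℂ) • (1 : H →L[ℂ] H) ∧ 0 < fmSq d m k :=
  statement2_general d m hm0 hm2 cs k
end

section
/- For every integer d ≥ 1, every real number m with 0 < m < 2, and every k = (k_1, …, k_d) ∈ ℝ^d, one has Σ_{j=1}^d sin²(2π k_j) + (Σ_{j=1}^d (cos(2π k_j) − 1) + m)² > 0. -/
theorem Finset.exists_nat_sum_eq_neg_two_mul {ι : Type*} (s : Finset ι) (x : ι → ℝ)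
    (hx : ∀ i ∈ s, x i = 0 ∨ x i = -2) : ∃ n : ℕ, ∑ i ∈ s, x i = -2 * n := by
  classical
  induction s using Finset.induction_on with
  | empty => exact ⟨0, by simp⟩
  | insert a s ha ih =>
    obtain ⟨n, hn⟩ := ih fun i hi ↦ hx i (Finset.mem_insert_of_mem hi)
    rw [Finset.sum_insert ha, hn]
    rcases hx a (Finset.mem_insert_self a s) with h | h
    · exact ⟨n, by rw [h]; ring⟩
    · exact ⟨n + 1, by rw [h]; push_cast; ring⟩

theorem sum_cos_sub_one_add_ne_zero {ι : Type*} [Fintype ι] (θ : ι → ℝ)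
    (hsin : ∀ j, Real.sin (θ j) = 0) {m : ℝ} (hm : ∀ n : ℕ, m ≠ 2 * n) :
    ∑ j, (Real.cos (θ j) - 1) + m ≠ 0 := by
  obtain ⟨n, hn⟩ := Finset.univ.exists_nat_sum_eq_neg_two_mul (fun j ↦ Real.cos (θ j) - 1)
    fun j _ ↦ by
      rcases Real.sin_eq_zero_iff_cos_eq.mp (hsin j) with h | h <;> norm_num [h]
  rw [hn]
  intro h
  exact hm n (by linarith)

theorem sum_sin_sq_add_sq_sum_cos_sub_one_add_pos {ι : Type*} [Fintype ι] (θ : ι → ℝ)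
    {m : ℝ} (hm : ∀ n : ℕ, m ≠ 2 * n) :
    0 < ∑ j, Real.sin (θ j) ^ 2 + (∑ j, (Real.cos (θ j) - 1) + m) ^ 2 := by
  by_cases hsin : ∀ j, Real.sin (θ j) = 0
  · have := sum_cos_sub_one_add_ne_zero θ hsin hm
    positivity
  · obtain ⟨j, hj⟩ := not_forall.mp hsin
    have hpos : 0 < ∑ j, Real.sin (θ j) ^ 2 :=
      Finset.sum_pos' (fun i _ ↦ sq_nonneg _) ⟨j, Finset.mem_univ j, by positivity⟩
    linarith [sq_nonneg (∑ j, (Real.cos (θ j) - 1) + m)]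

theorem statement9_general (d : ℕ) (m : ℝ) (hm0 : 0 < m) (hm2 : m < 2)
    (k : Fin d → ℝ) :
    0 < ∑ j, Real.sin (2 * Real.pi * k j) ^ 2 +
      (∑ j, (Real.cos (2 * Real.pi * k j) - 1) + m) ^ 2 := by
  refine sum_sin_sq_add_sq_sum_cos_sub_one_add_pos (fun j ↦ 2 * Real.pi * k j) fun n hn ↦ ?_
  rcases Nat.eq_zero_or_pos n with rfl | hpos
  · simp [hn] at hm0
  · have : (1 : ℝ) ≤ n := by exact_mod_cast hpos
    linarith

/-- scalar positivity at the heart of Lemma 3.5. -/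
theorem statement9 (d : ℕ) (hd : 1 ≤ d) (m : ℝ) (hm0 : 0 < m) (hm2 : m < 2)
    (k : Fin d → ℝ) :
    0 < ∑ j, Real.sin (2 * Real.pi * k j) ^ 2 +
      (∑ j, (Real.cos (2 * Real.pi * k j) - 1) + m) ^ 2 :=
  statement9_general d m hm0 hm2 k
end
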